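/- Let G be a graph and let v be a vertex of G with at least four pendant leaves attached. Then in Non-Disconnecting Arc-Kayles, the graph G has the same outcome as the graph G' obtained from G by deleting one of these leaves (so that v still has at least three leaves). -/

import Mathlib

/-!
While `v` keeps three pendant leaves, no legal move can take `v`: deleting `v` and one more
vertex leaves two of its leaves as isolated vertices. Hence no move takes a leaf of `v` either,
and every move deletes two vertices other than `v` and its leaves. As `v` survives every move, the
leaf `ℓ 3` never decides whether the rest stays connected, so the legal moves with and without
`ℓ 3` coincide and lead to positions of the same kind; induction along the game concludes.
-/

open SimpleGraph Finset

variable {V : Type*} [Fintype V] [DecidableEq V]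

/-- A legal move in Non-Disconnecting Arc-Kayles on position `s`. -/
def NDLegal (G : SimpleGraph V) (s : Finset V) (u v : V) : Prop :=
  u ∈ s ∧ v ∈ s ∧ G.Adj u v ∧
    (s \ {u, v} = ∅ ∨ (G.induce ((s \ {u, v} : Finset V) : Set V)).Connected)

/-- Fuel-indexed winning predicate (normal play). -/
def NDWinAux (G : SimpleGraph V) : ℕ → Finset V → Prop
  | 0, _ => False
  | n + 1, s => ∃ u v, NDLegal G s u v ∧ ¬ NDWinAux G n (s \ {u, v})

/-- The player to move wins Non-Disconnecting Arc-Kayles from position `s`. -/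
def NDFirstWins (G : SimpleGraph V) (s : Finset V) : Prop :=
  NDWinAux G s.card s

namespace SimpleGraph

omit [Fintype V] [DecidableEq V]

variable {G : SimpleGraph V} {l v : V}

def IsPendantLeaf (G : SimpleGraph V) (l v : V) : Prop :=
  ∀ x, G.Adj l x ↔ x = v

theorem IsPendantLeaf.adj (h : G.IsPendantLeaf l v) : G.Adj l v :=
  (h v).2 rfl

theorem IsPendantLeaf.eq_of_adj (h : G.IsPendantLeaf l v) {x : V} (hx : G.Adj l x) : x = v :=
  (h x).1 hx

theorem IsPendantLeaf.neighborSet_subsingleton (h : G.IsPendantLeaf l v) :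
    (G.neighborSet l).Subsingleton :=
  fun _ ha _ hb => (h.eq_of_adj ha).trans (h.eq_of_adj hb).symm

theorem IsPendantLeaf.not_connected_induce (h : G.IsPendantLeaf l v) {T : Set V}
    (hl : l ∈ T) (hv : v ∉ T) {b : V} (hb : b ∈ T) (hbl : b ≠ l) :
    ¬ (G.induce T).Connected := fun hT => by
  obtain ⟨p⟩ := hT.preconnected ⟨l, hl⟩ ⟨b, hb⟩
  have hsnd : G.Adj l p.snd := p.adj_snd (Walk.not_nil_of_ne (by simpa using hbl.symm))
  exact hv (h.eq_of_adj hsnd ▸ p.snd.2)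

theorem IsPendantLeaf.connected_induce_insert_iff (h : G.IsPendantLeaf l v) {S : Set V}
    (hv : v ∈ S) : (G.induce (insert l S)).Connected ↔ (G.induce S).Connected := by
  by_cases hl : l ∈ S
  · rw [Set.insert_eq_of_mem hl]
  classical
  refine ⟨fun hconn => ?_, fun hconn => ?_⟩
  · have : Nonempty S := ⟨⟨v, hv⟩⟩
    refine Connected.mk fun x y => ?_
    obtain ⟨p⟩ := hconn.preconnected ⟨x, .inr x.2⟩ ⟨y, .inr y.2⟩
    let q := p.toPath.1.map (Embedding.induce _).toHom
    have hq : q.IsPath := p.toPath.2.map Subtype.val_injective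
    have hlq : l ∉ q.support := hq.isTrail.not_mem_support_of_subsingleton_neighborSet
      (fun e => hl (e ▸ x.2)) (fun e => hl (e ▸ y.2)) h.neighborSet_subsingleton
    have hqS : ∀ z ∈ q.support, z ∈ S := by
      intro z hz
      obtain ⟨z', -, rfl⟩ := List.mem_map.1 (Walk.support_map _ _ ▸ hz)
      exact z'.2.resolve_left fun e => hlq (e ▸ hz)
    exact ⟨q.induce S hqS⟩
  · have hsingle : (G.induce {l}).Preconnected := Preconnected.of_subsingleton
    rw [← Set.union_singleton]
    exact G.connected_induce_union hconn.preconnected hsingle hv rfl h.adj.symm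

end SimpleGraph

section Game

omit [Fintype V]

variable {G : SimpleGraph V} {s L : Finset V} {u w l v : V}

theorem NDLegal.symm (h : NDLegal G s u w) : NDLegal G s w u := by
  obtain ⟨hu, hw, hadj, hrest⟩ := h
  exact ⟨hw, hu, hadj.symm, pair_comm u w ▸ hrest⟩

theorem NDLegal.card_sdiff_lt (h : NDLegal G s u w) : (s \ {u, w}).card < s.card :=
  card_lt_card (sdiff_ssubset (insert_subset h.1 (singleton_subset_iff.2 h.2.1))
    (insert_nonempty _ _))

theorem not_ndWinAux_empty (G : SimpleGraph V) (n : ℕ) : ¬ NDWinAux G n ∅ := by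
  cases n with
  | zero => exact id
  | succ n =>
    rintro ⟨u, w, ⟨hu, -⟩, -⟩
    exact notMem_empty u hu

theorem ndWinAux_congr_fuel {n m : ℕ} (hn : s.card ≤ n) (hm : s.card ≤ m) :
    NDWinAux G n s ↔ NDWinAux G m s := by
  induction n generalizing m s with
  | zero =>
    obtain rfl := card_eq_zero.1 (Nat.le_zero.1 hn)
    exact iff_of_false (not_ndWinAux_empty G 0) (not_ndWinAux_empty G m)
  | succ n ih =>
    cases m with
    | zero =>
      obtain rfl := card_eq_zero.1 (Nat.le_zero.1 hm)
      exact iff_of_false (not_ndWinAux_empty G _) (not_ndWinAux_empty G 0)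
    | succ m =>
      refine exists₂_congr fun u w => and_congr_right fun h => not_congr (ih ?_ ?_) <;>
        have := h.card_sdiff_lt <;> omega

theorem NDLegal.left_ne_of_pendantLeaves (hL : ∀ a ∈ L, G.IsPendantLeaf a v)
    (hLcard : 3 ≤ L.card) (hLs : L ⊆ s) (h : NDLegal G s u w) : u ≠ v := by
  rintro rfl
  have hcard : 1 < (L.erase w).card := by
    have := pred_card_le_card_erase (s := L) (a := w)
    omega
  obtain ⟨a, ha, b, hb, hab⟩ := one_lt_card.1 hcard
  have hmem : ∀ c ∈ L.erase w, c ∈ s \ {u, w} := fun c hc => by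
    obtain ⟨hcw, hcL⟩ := mem_erase.1 hc
    simp [hLs hcL, hcw, (hL c hcL).adj.ne]
  refine (hL a (mem_of_mem_erase ha)).not_connected_induce (mem_coe.2 (hmem a ha)) (by simp)
    (mem_coe.2 (hmem b hb)) (Ne.symm hab) ?_
  exact h.2.2.2.resolve_left (ne_empty_of_mem (hmem a ha))

theorem ndLegal_erase_iff (hl : G.IsPendantLeaf l v) (hls : l ∈ s) (hvs : v ∈ s)
    (hu : u ≠ v) (hw : w ≠ v) (hadj : G.Adj u w) :
    NDLegal G (s.erase l) u w ↔ NDLegal G s u w := by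
  have hul : u ≠ l := fun e => hw (hl.eq_of_adj (e ▸ hadj))
  have hwl : w ≠ l := fun e => hu (hl.eq_of_adj (e ▸ hadj.symm))
  have hvrest : v ∈ (s \ {u, w}).erase l := by simp [hvs, hu.symm, hw.symm, hl.adj.ne.symm]
  have hconn : (G.induce ((s \ {u, w}).erase l : Set V)).Connected ↔
      (G.induce ((s \ {u, w} : Finset V) : Set V)).Connected := by
    rw [← hl.connected_induce_insert_iff hvrest, ← coe_insert,
      insert_erase (by simp [hls, hul.symm, hwl.symm])]
  rw [NDLegal, NDLegal, erase_sdiff_comm]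
  simp only [mem_erase, ne_eq, hul, hwl, not_false_eq_true, true_and, ne_empty_of_mem hvrest,
    ne_empty_of_mem (mem_of_mem_erase hvrest), false_or, hconn]

theorem ndWinAux_erase_pendantLeaf_iff (hl : G.IsPendantLeaf l v)
    (hL : ∀ a ∈ L, G.IsPendantLeaf a v) (hLcard : 3 ≤ L.card) (n : ℕ)
    (hls : l ∈ s) (hvs : v ∈ s) (hLs : L ⊆ s.erase l) :
    NDWinAux G n (s.erase l) ↔ NDWinAux G n s := by
  induction n generalizing s with
  | zero => exact Iff.rfl
  | succ n ih =>
    refine exists₂_congr fun u w => ?_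
    have avoid : ∀ {t : Finset V}, L ⊆ t → NDLegal G t u w → u ≠ v ∧ w ≠ v ∧ G.Adj u w :=
      fun hLt h => ⟨h.left_ne_of_pendantLeaves hL hLcard hLt,
        h.symm.left_ne_of_pendantLeaves hL hLcard hLt, h.2.2.1⟩
    suffices key : u ≠ v ∧ w ≠ v ∧ G.Adj u w → (NDLegal G (s.erase l) u w ↔ NDLegal G s u w) ∧
        (NDWinAux G n (s.erase l \ {u, w}) ↔ NDWinAux G n (s \ {u, w})) by
      constructor <;> rintro ⟨h, hlose⟩
      · obtain ⟨hleg, hwin⟩ := key (avoid hLs h)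
        exact ⟨hleg.1 h, mt hwin.2 hlose⟩
      · obtain ⟨hleg, hwin⟩ := key (avoid (hLs.trans (erase_subset _ _)) h)
        exact ⟨hleg.2 h, mt hwin.1 hlose⟩
    rintro ⟨hu, hw, hadj⟩
    have hul : u ≠ l := fun e => hw (hl.eq_of_adj (e ▸ hadj))
    have hwl : w ≠ l := fun e => hu (hl.eq_of_adj (e ▸ hadj.symm))
    have huL : u ∉ L := fun h => hw ((hL u h).eq_of_adj hadj)
    have hwL : w ∉ L := fun h => hu ((hL w h).eq_of_adj hadj.symm)
    refine ⟨ndLegal_erase_iff hl hls hvs hu hw hadj, ?_⟩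
    rw [erase_sdiff_comm]
    refine ih (by simp [hls, hul.symm, hwl.symm]) (by simp [hvs, hu.symm, hw.symm]) fun a ha => ?_
    have := hLs ha
    simp_all [ne_of_mem_of_not_mem ha huL, ne_of_mem_of_not_mem ha hwL]

theorem ndFirstWins_erase_pendantLeaf_iff (hl : G.IsPendantLeaf l v)
    (hL : ∀ a ∈ L, G.IsPendantLeaf a v) (hLcard : 3 ≤ L.card)
    (hls : l ∈ s) (hvs : v ∈ s) (hLs : L ⊆ s.erase l) :
    NDFirstWins G (s.erase l) ↔ NDFirstWins G s :=
  (ndWinAux_congr_fuel le_rfl (card_erase_le)).trans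
    (ndWinAux_erase_pendantLeaf_iff hl hL hLcard s.card hls hvs hLs)

end Game

/-- If `v` has at least four pendant leaves `ℓ 0, ℓ 1, ℓ 2, ℓ 3` in `G`, then deleting the
leaf `ℓ 3` (so that `v` keeps at least three leaves) does not change the outcome of
Non-Disconnecting Arc-Kayles. -/
theorem stmt_8 (G : SimpleGraph V) (v : V) (ℓ : Fin 4 → V)
    (hinj : Function.Injective ℓ)
    (hleaf : ∀ i : Fin 4, ∀ x : V, G.Adj (ℓ i) x ↔ x = v) :
    (NDFirstWins G Finset.univ ↔ NDFirstWins G (Finset.univ \ {ℓ 3})) := by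
  rw [sdiff_singleton_eq_erase]
  refine (ndFirstWins_erase_pendantLeaf_iff (L := (univ.erase 3).map ⟨ℓ, hinj⟩) (hleaf 3)
    ?_ ?_ (mem_univ _) (mem_univ v) ?_).symm
  · simp only [mem_map, Function.Embedding.coeFn_mk]
    rintro _ ⟨i, -, rfl⟩
    exact hleaf i
  · simp
  · intro a ha
    obtain ⟨i, hi, rfl⟩ := mem_map.1 ha
    exact mem_erase.2 ⟨hinj.ne (ne_of_mem_erase hi), mem_univ _⟩
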